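/- Let g ∈ L¹(ℝ^d) and let L_k > 0 for each positive integer k. Define 𝒫(g, 𝓛, ℝ^d) to be the set of continuous functions p : ℝ^d → [0,∞) such that p ≤ g almost everywhere, ∫ p = 1, and for every positive integer k, p restricted to the closed Euclidean ball B_k(0) of radius k is L_k-Lipschitz. Then 𝒫(g, 𝓛, ℝ^d) is convex, and it is sequentially compact in L¹: every sequence (p_n) in 𝒫(g, 𝓛, ℝ^d) has a subsequence converging in L¹ norm (and almost everywhere) to some element of 𝒫(g, 𝓛, ℝ^d). -/

import Mathlib

/-!
Every defining condition of `𝒫(g, 𝓛, ℝ^d)` is convex in `p`. For compactness, the Lipschitz bound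
on `B(x, 1)` together with `∫ p = 1` gives `p x ≤ L_k + 1 / |B(x, 1)|`, so the family is
equicontinuous and pointwise bounded. Tychonoff on a countable dense set and equicontinuity give a
subsequence converging everywhere; the defining conditions are closed under pointwise limits, and
dominated convergence (with `g` as dominating function) gives `∫ plim = 1` and `L¹` convergence.
-/

open MeasureTheory Real Filter

noncomputable section

abbrev E (d : ℕ) := EuclideanSpace ℝ (Fin d)

/-- Membership in the family `𝒫(g, 𝓛, ℝ^d)`: continuous nonnegative functions
dominated a.e. by `g`, integrating to one, and `L_k`-Lipschitz on each ball
of radius `k`. -/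
def memP {d : ℕ} (g : E d → ℝ) (L : ℕ → ℝ) (p : E d → ℝ) : Prop :=
  Continuous p ∧ (∀ θ, 0 ≤ p θ) ∧ (∀ᵐ θ : E d, p θ ≤ g θ) ∧ (∫ θ, p θ = 1) ∧
    ∀ k : ℕ, 1 ≤ k → ∀ x y : E d, ‖x‖ ≤ (k : ℝ) → ‖y‖ ≤ (k : ℝ) →
      |p x - p y| ≤ L k * ‖x - y‖

open Metric Set Topology

theorem equicontinuousAt_of_lipschitzOnWith {ι X Y : Type*} [PseudoEMetricSpace X]
    [PseudoEMetricSpace Y] {F : ι → X → Y} {K : NNReal} {s : Set X} {x : X} (hs : s ∈ 𝓝 x)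
    (hF : ∀ i, LipschitzOnWith K (F i) s) : EquicontinuousAt F x := by
  have := (LipschitzOnWith.uniformEquicontinuousOn F K hF).equicontinuousOn x (mem_of_mem_nhds hs)
  rwa [EquicontinuousWithinAt, nhdsWithin_eq_nhds.2 hs] at this

theorem Equicontinuous.cauchySeq_of_dense {X α : Type*} [TopologicalSpace X]
    [PseudoMetricSpace α] {F : ℕ → X → α} (hF : Equicontinuous F) {s : Set X} (hs : Dense s)
    (h : ∀ y ∈ s, CauchySeq (F · y)) (x : X) : CauchySeq (F · x) := by
  rw [Metric.cauchySeq_iff]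
  intro ε hε
  have hnear := Metric.equicontinuousAt_iff_right.1 (hF x) (ε / 3) (by positivity)
  obtain ⟨y, hxy, hys⟩ := (hnear.and_frequently (mem_closure_iff_frequently.1 (hs x))).exists
  obtain ⟨N, hN⟩ := Metric.cauchySeq_iff.1 (h y hys) (ε / 3) (by positivity)
  refine ⟨N, fun m hm n hn => ?_⟩
  calc dist (F m x) (F n x) ≤ dist (F m x) (F m y) + dist (F m y) (F n y) + dist (F n y) (F n x) :=
        dist_triangle4 _ _ _ _
    _ < ε / 3 + ε / 3 + ε / 3 := by
        gcongr
        · exact hxy m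
        · exact hN m hm n hn
        · rw [dist_comm]; exact hxy n
    _ = ε := by ring

theorem Equicontinuous.exists_subseq_tendsto {X α : Type*} [TopologicalSpace X]
    [TopologicalSpace.SeparableSpace X] [PseudoMetricSpace α] [ProperSpace α] {F : ℕ → X → α}
    (hF : Equicontinuous F) (hb : ∀ x, Bornology.IsBounded (range (F · x))) :
    ∃ f : X → α, ∃ φ : ℕ → ℕ, StrictMono φ ∧ ∀ x, Tendsto (fun j => F (φ j) x) atTop (𝓝 (f x)) := by
  obtain ⟨s, hsc, hsd⟩ := TopologicalSpace.exists_countable_dense X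
  have : Countable s := hsc.to_subtype
  have hK : IsCompact (univ.pi fun y : s => closure (range (F · y))) :=
    isCompact_univ_pi fun y => (hb y).isCompact_closure
  obtain ⟨q, -, φ, hφ, hq⟩ := hK.isSeqCompact (x := fun j (y : s) => F j y)
    fun j y _ => subset_closure ⟨j, rfl⟩
  have hcauchy := (hF.comp φ).cauchySeq_of_dense hsd fun y hy =>
    (tendsto_pi_nhds.1 hq ⟨y, hy⟩).cauchySeq
  choose f hf using fun x => cauchySeq_tendsto_of_complete (hcauchy x)
  exact ⟨f, φ, hφ, hf⟩

theorem measureReal_closedBall_mul_sub_le_integral {X : Type*} [PseudoMetricSpace X]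
    [MeasurableSpace X] [OpensMeasurableSpace X] {μ : Measure X} {p : X → ℝ} {K : NNReal}
    {x : X} {r : ℝ} (hμ : μ (closedBall x r) ≠ ⊤) (hp : LipschitzOnWith K p (closedBall x r))
    (hp0 : 0 ≤ᵐ[μ] p) (hpi : Integrable p μ) :
    μ.real (closedBall x r) * (p x - K * r) ≤ ∫ y, p y ∂μ := by
  have hball : ∀ y ∈ closedBall x r, p x - K * r ≤ p y := by
    intro y hy
    have hx : x ∈ closedBall x r := mem_closedBall_self (dist_nonneg.trans hy)
    have := (abs_sub_le_iff.1 (hp.dist_le_mul x hx y hy)).1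
    rw [dist_comm] at this
    nlinarith [mem_closedBall.1 hy, K.2]
  calc μ.real (closedBall x r) * (p x - K * r)
      ≤ ∫ y in closedBall x r, p y ∂μ := by
        rw [← smul_eq_mul]
        exact setIntegral_ge_of_const_le measurableSet_closedBall hμ hball hpi.integrableOn
    _ ≤ ∫ y, p y ∂μ := setIntegral_le_integral hpi hp0

theorem tendsto_integral_abs_sub_of_dominated_convergence {α : Type*} [MeasurableSpace α]
    {μ : Measure α} {F : ℕ → α → ℝ} {f : α → ℝ} (bound : α → ℝ)
    (hF_meas : ∀ n, AEStronglyMeasurable (F n) μ) (h_int : Integrable bound μ)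
    (h_bound : ∀ n, ∀ᵐ a ∂μ, |F n a| ≤ bound a)
    (h_lim : ∀ᵐ a ∂μ, Tendsto (F · a) atTop (𝓝 (f a))) :
    Tendsto (fun n => ∫ a, |F n a - f a| ∂μ) atTop (𝓝 0) := by
  have hf_meas : AEStronglyMeasurable f μ := aestronglyMeasurable_of_tendsto_ae atTop hF_meas h_lim
  have hf_bound : ∀ᵐ a ∂μ, |f a| ≤ bound a := by
    filter_upwards [ae_all_iff.2 h_bound, h_lim] with a ha hlim
    exact le_of_tendsto' hlim.abs ha
  have := tendsto_integral_of_dominated_convergence (f := fun _ => 0) (fun a => 2 * bound a)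
    (fun n => ((hF_meas n).sub hf_meas).norm) (h_int.const_mul 2) (fun n => ?_) ?_
  · simpa using this
  · filter_upwards [h_bound n, hf_bound] with a h1 h2
    simp only [norm_eq_abs, abs_abs, Pi.sub_apply]
    linarith [abs_sub (F n a) (f a)]
  · filter_upwards [h_lim] with a ha
    simpa using (ha.sub_const (f a)).norm

theorem closedBall_one_subset_closedBall_natCeil {F : Type*} [SeminormedAddCommGroup F] (x : F) :
    closedBall x 1 ⊆ closedBall 0 ((⌈‖x‖⌉₊ + 1 : ℕ) : ℝ) := fun y hy => by
  rw [mem_closedBall_zero_iff]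
  push_cast
  linarith [norm_le_of_mem_closedBall hy, Nat.le_ceil ‖x‖]

namespace memP

variable {d : ℕ} {g : E d → ℝ} {L : ℕ → ℝ} {p : E d → ℝ}

theorem norm_le (hp : memP g L p) : ∀ᵐ θ, ‖p θ‖ ≤ g θ := by
  filter_upwards [hp.2.2.1] with θ h
  rwa [norm_of_nonneg (hp.2.1 θ)]

theorem integrable (hg : Integrable g) (hp : memP g L p) : Integrable p :=
  hg.mono' hp.1.aestronglyMeasurable hp.norm_le

theorem lipschitzOnWith (hp : memP g L p) {k : ℕ} (hk : 1 ≤ k) :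
    LipschitzOnWith (L k).toNNReal p (closedBall 0 k) := by
  refine LipschitzOnWith.of_dist_le_mul fun x hx y hy => ?_
  rw [dist_eq_norm, dist_eq_norm]
  exact (hp.2.2.2.2 k hk x y (mem_closedBall_zero_iff.1 hx) (mem_closedBall_zero_iff.1 hy)).trans
    (by gcongr; exact le_coe_toNNReal _)

theorem le_of_measureReal_closedBall (hg : Integrable g) (hp : memP g L p) (x : E d) :
    p x ≤ (L (⌈‖x‖⌉₊ + 1)).toNNReal + (volume.real (closedBall x 1))⁻¹ := by
  have hμ : volume (closedBall x 1) ≠ ⊤ := measure_closedBall_lt_top.ne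
  have hpos : 0 < volume.real (closedBall x 1) :=
    ENNReal.toReal_pos (measure_closedBall_pos volume x one_pos).ne' hμ
  have := measureReal_closedBall_mul_sub_le_integral hμ
    ((hp.lipschitzOnWith (Nat.le_add_left 1 _)).mono (closedBall_one_subset_closedBall_natCeil x))
    (Eventually.of_forall hp.2.1) (hp.integrable hg)
  rw [hp.2.2.2.1, mul_one, ← le_div_iff₀' hpos, one_div] at this
  linarith

theorem _root_.equicontinuous_of_memP {ι : Type*} {F : ι → E d → ℝ} (hF : ∀ i, memP g L (F i)) :
    Equicontinuous F := fun x =>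
  equicontinuousAt_of_lipschitzOnWith
    (mem_of_superset (closedBall_mem_nhds x one_pos) (closedBall_one_subset_closedBall_natCeil x))
    fun i => (hF i).lipschitzOnWith (Nat.le_add_left 1 _)

theorem _root_.convex_setOf_memP (hg : Integrable g) : Convex ℝ {p | memP g L p} := by
  intro p hp q hq a b ha hb hab
  refine ⟨(hp.1.const_smul a).add (hq.1.const_smul b),
    fun θ => add_nonneg (mul_nonneg ha (hp.2.1 θ)) (mul_nonneg hb (hq.2.1 θ)), ?_, ?_, ?_⟩
  · filter_upwards [hp.2.2.1, hq.2.2.1] with θ hpθ hqθ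
    calc a * p θ + b * q θ ≤ a * g θ + b * g θ := by gcongr
      _ = g θ := by rw [← add_mul, hab, one_mul]
  · simp only [Pi.add_apply, Pi.smul_apply, smul_eq_mul]
    rw [integral_add ((hp.integrable hg).const_mul a) ((hq.integrable hg).const_mul b),
      integral_const_mul, integral_const_mul, hp.2.2.2.1, hq.2.2.2.1, mul_one, mul_one, hab]
  · intro k hk x y hx hy
    have hpxy := hp.2.2.2.2 k hk x y hx hy
    have hqxy := hq.2.2.2.2 k hk x y hx hy
    simp only [Pi.add_apply, Pi.smul_apply, smul_eq_mul]
    calc |a * p x + b * q x - (a * p y + b * q y)|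
        = |a * (p x - p y) + b * (q x - q y)| := by ring_nf
      _ ≤ a * |p x - p y| + b * |q x - q y| := by
          refine (abs_add_le _ _).trans_eq ?_
          rw [abs_mul, abs_mul, abs_of_nonneg ha, abs_of_nonneg hb]
      _ ≤ a * (L k * ‖x - y‖) + b * (L k * ‖x - y‖) := by gcongr
      _ = L k * ‖x - y‖ := by rw [← add_mul, hab, one_mul]

theorem of_tendsto (hg : Integrable g) {F : ℕ → E d → ℝ} {f : E d → ℝ}
    (hF : ∀ j, memP g L (F j)) (hlim : ∀ x, Tendsto (F · x) atTop (𝓝 (f x))) : memP g L f := by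
  refine ⟨(tendsto_pi_nhds.2 hlim).continuous_of_equicontinuous (equicontinuous_of_memP hF),
    fun x => ge_of_tendsto' (hlim x) fun j => (hF j).2.1 x, ?_, ?_, ?_⟩
  · filter_upwards [ae_all_iff.2 fun j => (hF j).2.2.1] with x hx
    exact le_of_tendsto' (hlim x) hx
  · have hint := tendsto_integral_of_dominated_convergence g
      (fun j => (hF j).1.aestronglyMeasurable) hg (fun j => (hF j).norm_le)
      (Eventually.of_forall hlim)
    simp only [(hF _).2.2.2.1] at hint
    exact tendsto_nhds_unique hint tendsto_const_nhds
  · intro k hk x y hx hy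
    exact le_of_tendsto' ((hlim x).sub (hlim y)).abs fun j => (hF j).2.2.2.2 k hk x y hx hy

end memP

theorem P_convex_and_compact_general (d : ℕ) (g : E d → ℝ) (hg : Integrable g)
    (L : ℕ → ℝ) :
    (∀ p q : E d → ℝ, memP g L p → memP g L q →
      ∀ a b : ℝ, 0 ≤ a → 0 ≤ b → a + b = 1 →
        memP g L (fun θ => a * p θ + b * q θ)) ∧
    (∀ pseq : ℕ → E d → ℝ, (∀ j, memP g L (pseq j)) →
      ∃ plim : E d → ℝ, memP g L plim ∧
        ∃ φ : ℕ → ℕ, StrictMono φ ∧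
          Tendsto (fun j => ∫ θ, |pseq (φ j) θ - plim θ|) atTop (nhds 0) ∧
          ∀ᵐ θ : E d, Tendsto (fun j => pseq (φ j) θ) atTop (nhds (plim θ))) := by
  refine ⟨fun p q hp hq a b ha hb hab => convex_setOf_memP hg hp hq ha hb hab, fun pseq hP => ?_⟩
  have hbdd : ∀ x, Bornology.IsBounded (range (pseq · x)) := fun x =>
    isBounded_Icc 0 _ |>.subset <| range_subset_iff.2 fun j =>
      ⟨(hP j).2.1 x, (hP j).le_of_measureReal_closedBall hg x⟩
  obtain ⟨plim, φ, hφ, hlim⟩ := (equicontinuous_of_memP hP).exists_subseq_tendsto hbdd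
  exact ⟨plim, memP.of_tendsto hg (fun j => hP (φ j)) hlim, φ, hφ,
    tendsto_integral_abs_sub_of_dominated_convergence g (fun j => (hP (φ j)).1.aestronglyMeasurable)
      hg (fun j => (hP (φ j)).norm_le) (Eventually.of_forall hlim),
    Eventually.of_forall hlim⟩

/-- The set `𝒫(g, 𝓛, ℝ^d)` is convex and sequentially compact in `L¹`:
every sequence in it has a subsequence converging in `L¹` norm and almost
everywhere to an element of the set. -/
theorem P_convex_and_compact (d : ℕ) (g : E d → ℝ) (hg : Integrable g)
    (L : ℕ → ℝ) (hL : ∀ k, 1 ≤ k → 0 < L k) :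
    (∀ p q : E d → ℝ, memP g L p → memP g L q →
      ∀ a b : ℝ, 0 ≤ a → 0 ≤ b → a + b = 1 →
        memP g L (fun θ => a * p θ + b * q θ)) ∧
    (∀ pseq : ℕ → E d → ℝ, (∀ j, memP g L (pseq j)) →
      ∃ plim : E d → ℝ, memP g L plim ∧
        ∃ φ : ℕ → ℕ, StrictMono φ ∧
          Tendsto (fun j => ∫ θ, |pseq (φ j) θ - plim θ|) atTop (nhds 0) ∧
          ∀ᵐ θ : E d, Tendsto (fun j => pseq (φ j) θ) atTop (nhds (plim θ))) :=
  P_convex_and_compact_general d g hg L
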